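/- arXiv:1902.11047 — 4 statements merged into one kernel-verified Lean document; each statement's English description precedes it below -/
import Mathlib

section
/- Every MWSR flow is a maximum flow: if a feasible flow f minimizes ∑_{j∈A} e_j (r_j^f)² among all feasible flows, then the value of f is maximal among all feasible flows. -/
open Finset
open scoped Classical

variable {S A : Type*} [Fintype S] [Fintype A]

/-- A feasible flow: nonnegative on edges, zero off edges, outflow of each security
bounded by its value, inflow of each account bounded by its exposure. -/
def Feasible (E : Finset (S × A)) (v : S → ℝ) (e : A → ℝ) (f : S → A → ℝ) : Prop :=
  (∀ i j, (i, j) ∈ E → 0 ≤ f i j) ∧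
  (∀ i j, (i, j) ∉ E → f i j = 0) ∧
  (∀ i : S, ∑ j ∈ Finset.univ.filter (fun j => (i, j) ∈ E), f i j ≤ v i) ∧
  (∀ j : A, ∑ i ∈ Finset.univ.filter (fun i => (i, j) ∈ E), f i j ≤ e j)

/-- The value of a flow: total flow on all edges. -/
noncomputable def flowValue (E : Finset (S × A)) (f : S → A → ℝ) : ℝ :=
  ∑ p ∈ E, f p.1 p.2

/-- The risk ratio of account `j` under a flow `f`. -/
noncomputable def riskRatio (E : Finset (S × A)) (e : A → ℝ) (f : S → A → ℝ) (j : A) : ℝ :=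
  (e j - ∑ i ∈ Finset.univ.filter (fun i => (i, j) ∈ E), f i j) / e j

/-- A maximum flow: feasible, with value maximal among feasible flows. -/
def IsMaxFlow (E : Finset (S × A)) (v : S → ℝ) (e : A → ℝ) (f : S → A → ℝ) : Prop :=
  Feasible E v e f ∧ ∀ g : S → A → ℝ, Feasible E v e g → flowValue E g ≤ flowValue E f

/-- The ratio constraint: if `f` sends positive flow from `i` to `j` and `i` could
also be used for `l`, then the risk ratio of `j` is at least that of `l`. -/
def RatioConstraint (E : Finset (S × A)) (e : A → ℝ) (f : S → A → ℝ) : Prop :=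
  ∀ i j l, (i, j) ∈ E → 0 < f i j → (i, l) ∈ E →
    riskRatio E e f l ≤ riskRatio E e f j

/-- A ratio-balanced (maximum) flow. -/
def RatioBalanced (E : Finset (S × A)) (v : S → ℝ) (e : A → ℝ) (f : S → A → ℝ) : Prop :=
  IsMaxFlow E v e f ∧ RatioConstraint E e f

/-- The weighted sum of squared risk ratios `∑ j, e j * (r_j^f)^2`. -/
noncomputable def objective (E : Finset (S × A)) (e : A → ℝ) (f : S → A → ℝ) : ℝ :=
  ∑ j : A, e j * (riskRatio E e f j) ^ 2

/-- An MWSR flow: a feasible flow minimizing the weighted sum of squared risk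
ratios among all feasible flows. -/
def MWSR (E : Finset (S × A)) (v : S → ℝ) (e : A → ℝ) (f : S → A → ℝ) : Prop :=
  Feasible E v e f ∧ ∀ g : S → A → ℝ, Feasible E v e g → objective E e f ≤ objective E e g

/-!
If an MWSR flow `f` were not maximum, its residual graph would contain an augmenting path ending
at an unsaturated account `j`. Pushing a little flow along it changes no inflow except that of
`j`, which grows, so the risk ratio of `j` drops and the objective strictly decreases.

Instead of paths we use the set `R` of securities reachable in the residual graph. Securities
outside `R` are saturated, accounts adjacent to `R` are saturated, and no flow enters those
accounts from outside `R`. So the complement of `R` together with the neighbours of `R` is a cut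
whose capacity is the value of `f`, and every feasible flow is bounded by that capacity.
-/

section Outflow

omit [Fintype S]

variable (E : Finset (S × A))

noncomputable def outflow (f : S → A → ℝ) (i : S) : ℝ :=
  ∑ j ∈ univ.filter (fun j => (i, j) ∈ E), f i j

variable {E}

lemma outflow_add (f g : S → A → ℝ) : outflow E (f + g) = outflow E f + outflow E g := by
  ext i; exact sum_add_distrib

lemma outflow_smul (c : ℝ) (f : S → A → ℝ) : outflow E (c • f) = c • outflow E f := by
  ext i; exact (mul_sum ..).symm

lemma outflow_single {i : S} {j : A} (hij : (i, j) ∈ E) (c : ℝ) :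
    outflow E (Pi.single i (Pi.single j c)) = Pi.single i c := by
  ext a
  rcases eq_or_ne a i with rfl | ha
  · simp [outflow, hij]
  · simp [outflow, ha]

lemma sum_outflow (f : S → A → ℝ) (T : Finset S) :
    ∑ i ∈ T, outflow E f i = ∑ p ∈ E.filter (fun p => p.1 ∈ T), f p.1 p.2 :=
  (sum_finset_product' _ _ _ (by simp [and_comm])).symm

end Outflow

section Inflow

omit [Fintype A]

variable (E : Finset (S × A))

noncomputable def inflow (f : S → A → ℝ) (j : A) : ℝ :=
  ∑ i ∈ univ.filter (fun i => (i, j) ∈ E), f i j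

variable {E}

lemma riskRatio_eq (e : A → ℝ) (f : S → A → ℝ) (j : A) :
    riskRatio E e f j = (e j - inflow E f j) / e j := rfl

lemma inflow_add (f g : S → A → ℝ) : inflow E (f + g) = inflow E f + inflow E g := by
  ext j; exact sum_add_distrib

lemma inflow_smul (c : ℝ) (f : S → A → ℝ) : inflow E (c • f) = c • inflow E f := by
  ext j; exact (mul_sum ..).symm

lemma inflow_single {i : S} {j : A} (hij : (i, j) ∈ E) (c : ℝ) :
    inflow E (Pi.single i (Pi.single j c)) = Pi.single j c := by
  ext b
  rcases eq_or_ne b j with rfl | hb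
  · simp [inflow, Pi.single_apply, ite_apply, hij]
  · simp [inflow, Pi.single_apply, ite_apply, hb]

lemma sum_inflow (f : S → A → ℝ) (U : Finset A) :
    ∑ j ∈ U, inflow E f j = ∑ p ∈ E.filter (fun p => p.2 ∈ U), f p.1 p.2 :=
  (sum_finset_product_right' _ _ _ (by simp [and_comm])).symm

end Inflow

section Feasible

variable {E : Finset (S × A)} {v : S → ℝ} {e : A → ℝ} {f : S → A → ℝ}

lemma Feasible.nonneg (hf : Feasible E v e f) {i : S} {j : A} (hij : (i, j) ∈ E) :
    0 ≤ f i j :=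
  hf.1 i j hij

lemma Feasible.eq_zero (hf : Feasible E v e f) {i : S} {j : A} (hij : (i, j) ∉ E) :
    f i j = 0 :=
  hf.2.1 i j hij

lemma Feasible.outflow_le (hf : Feasible E v e f) (i : S) : outflow E f i ≤ v i :=
  hf.2.2.1 i

lemma Feasible.inflow_le (hf : Feasible E v e f) (j : A) : inflow E f j ≤ e j :=
  hf.2.2.2 j

variable (E v e) in
lemma convex_feasible : Convex ℝ {f | Feasible E v e f} := by
  intro f hf g hg a b ha hb hab
  refine ⟨fun i j hij => ?_, fun i j hij => ?_, fun i => ?_, fun j => ?_⟩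
  · simp only [Pi.add_apply, Pi.smul_apply, smul_eq_mul]
    have := hf.nonneg hij; have := hg.nonneg hij
    positivity
  · simp [hf.eq_zero hij, hg.eq_zero hij]
  · change outflow E (a • f + b • g) i ≤ v i
    simp only [outflow_add, outflow_smul, Pi.add_apply, Pi.smul_apply, smul_eq_mul]
    have hf' := mul_le_mul_of_nonneg_left (hf.outflow_le i) ha
    have hg' := mul_le_mul_of_nonneg_left (hg.outflow_le i) hb
    linarith [show a * v i + b * v i = v i by rw [← add_mul, hab, one_mul]]
  · change inflow E (a • f + b • g) j ≤ e j
    simp only [inflow_add, inflow_smul, Pi.add_apply, Pi.smul_apply, smul_eq_mul]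
    have hf' := mul_le_mul_of_nonneg_left (hf.inflow_le j) ha
    have hg' := mul_le_mul_of_nonneg_left (hg.inflow_le j) hb
    linarith [show a * e j + b * e j = e j by rw [← add_mul, hab, one_mul]]

lemma Feasible.add_single (hf : Feasible E v e f) {i : S} {j : A} (hij : (i, j) ∈ E) {c : ℝ}
    (hc : 0 ≤ f i j + c) (hout : outflow E f i + c ≤ v i) (hin : inflow E f j + c ≤ e j) :
    Feasible E v e (f + (Pi.single i (Pi.single j c) : S → A → ℝ)) := by
  have h_off : ∀ a b, ¬(a = i ∧ b = j) →
      (Pi.single i (Pi.single j c) : S → A → ℝ) a b = 0 := by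
    intro a b h
    rcases not_and_or.mp h with ha | hb
    · simp [ha]
    · simp [Pi.single_apply, ite_apply, hb]
  refine ⟨fun a b hab => ?_, fun a b hab => ?_, fun a => ?_, fun b => ?_⟩
  · by_cases h : a = i ∧ b = j
    · obtain ⟨rfl, rfl⟩ := h
      simpa using hc
    · simpa [h_off a b h] using hf.nonneg hab
  · have h : ¬(a = i ∧ b = j) := fun ⟨ha, hb⟩ => hab (ha ▸ hb ▸ hij)
    simp [h_off a b h, hf.eq_zero hab]
  · change outflow E (f + _) a ≤ v a
    rw [outflow_add, outflow_single hij, Pi.add_apply]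
    rcases eq_or_ne a i with rfl | ha
    · simpa using hout
    · simpa [ha] using hf.outflow_le a
  · change inflow E (f + _) b ≤ e b
    rw [inflow_add, inflow_single hij, Pi.add_apply]
    rcases eq_or_ne b j with rfl | hb
    · simpa using hin
    · simpa [hb] using hf.inflow_le b

lemma objective_lt_of_inflow_lt (he : ∀ j, 0 < e j) {g : S → A → ℝ}
    (hg : ∀ j, inflow E g j ≤ e j) (hle : ∀ j, inflow E f j ≤ inflow E g j)
    (hlt : ∃ j, inflow E f j < inflow E g j) : objective E e g < objective E e f := by
  have hr₀ : ∀ j, 0 ≤ riskRatio E e g j := fun j =>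
    div_nonneg (sub_nonneg.mpr (hg j)) (he j).le
  obtain ⟨j₀, hj₀⟩ := hlt
  refine sum_lt_sum (fun j _ => ?_) ⟨j₀, mem_univ _, ?_⟩
  · have := hle j
    have := he j
    gcongr
    · exact hr₀ j
    · rw [riskRatio_eq, riskRatio_eq]; gcongr
  · have := he j₀
    gcongr
    · exact hr₀ j₀
    · rw [riskRatio_eq, riskRatio_eq]; gcongr

end Feasible

section Reachability

variable {E : Finset (S × A)} {v : S → ℝ} {e : A → ℝ} {f : S → A → ℝ}

variable (E v e) in
/-- Reachability of `i` from the source in the residual graph of `f`, phrased without paths: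
some rerouting of `f` that keeps every inflow leaves slack at `i`. -/
def ResidualReachable (f : S → A → ℝ) (i : S) : Prop :=
  ∃ h, Feasible E v e h ∧ inflow E h = inflow E f ∧ outflow E h i < v i

lemma residualReachable_of_outflow_lt (hf : Feasible E v e f) {i : S} (hi : outflow E f i < v i) :
    ResidualReachable E v e f i :=
  ⟨f, hf, rfl, hi⟩

lemma ResidualReachable.exists_pos (hf : Feasible E v e f) {i i' : S} {j : A}
    (hi : ResidualReachable E v e f i) (hi'j : (i', j) ∈ E) (hpos : 0 < f i' j) :
    ∃ m, Feasible E v e m ∧ inflow E m = inflow E f ∧ outflow E m i < v i ∧ 0 < m i' j := by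
  obtain ⟨h, hh, hin, hslack⟩ := hi
  refine ⟨(1 / 2 : ℝ) • f + (1 / 2 : ℝ) • h,
    convex_feasible E v e hf hh (by norm_num) (by norm_num) (by norm_num), ?_, ?_, ?_⟩
  · rw [inflow_add, inflow_smul, inflow_smul, hin, ← add_smul]
    norm_num
  · rw [outflow_add, outflow_smul, outflow_smul]
    simp only [Pi.add_apply, Pi.smul_apply, smul_eq_mul]
    linarith [hf.outflow_le i]
  · simp only [Pi.add_apply, Pi.smul_apply, smul_eq_mul]
    linarith [hh.nonneg hi'j]

lemma ResidualReachable.of_edge (hf : Feasible E v e f) {i i' : S} {j : A}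
    (hi : ResidualReachable E v e f i) (hij : (i, j) ∈ E) (hi'j : (i', j) ∈ E)
    (hpos : 0 < f i' j) : ResidualReachable E v e f i' := by
  rcases eq_or_ne i' i with rfl | hne
  · exact hi
  obtain ⟨m, hm, hm_in, hm_slack, hm_pos⟩ := hi.exists_pos hf hi'j hpos
  set c := min (v i - outflow E m i) (m i' j)
  have hc : 0 < c := lt_min (by linarith) hm_pos
  set m₁ := m + (Pi.single i' (Pi.single j (-c)) : S → A → ℝ)
  have hm₁ : Feasible E v e m₁ :=
    hm.add_single hi'j (by linarith [min_le_right (v i - outflow E m i) (m i' j)])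
      (by linarith [hm.outflow_le i']) (by linarith [hm.inflow_le j])
  have hm₁_out : outflow E m₁ = outflow E m + Pi.single i' (-c) := by
    rw [outflow_add, outflow_single hi'j]
  have hm₁_in : inflow E m₁ = inflow E m + Pi.single j (-c) := by
    rw [inflow_add, inflow_single hi'j]
  have hm₂ := hm₁.add_single hij (c := c) ?_ ?_ ?_
  · refine ⟨_, hm₂, ?_, ?_⟩
    · rw [inflow_add, inflow_single hij, hm₁_in, hm_in, add_assoc, ← Pi.single_add,
        neg_add_cancel, Pi.single_zero, add_zero]
    · rw [outflow_add, outflow_single hij, hm₁_out]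
      simp only [Pi.add_apply, Pi.single_eq_same, ne_eq, hne, not_false_eq_true,
        Pi.single_eq_of_ne, add_zero, add_neg_lt_iff_lt_add]
      linarith [hm.outflow_le i']
  · simp only [m₁, Pi.add_apply, ne_eq, hne.symm, not_false_eq_true, Pi.single_eq_of_ne,
      Pi.zero_apply, add_zero]
    linarith [hm.nonneg hij]
  · simp only [hm₁_out, Pi.add_apply, ne_eq, hne.symm, not_false_eq_true, Pi.single_eq_of_ne,
      add_zero]
    linarith [min_le_left (v i - outflow E m i) (m i' j)]
  · simp only [hm₁_in, Pi.add_apply, Pi.single_eq_same, neg_add_cancel_right]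
    linarith [hm.inflow_le j]

lemma ResidualReachable.inflow_eq (he : ∀ j, 0 < e j) (hf : MWSR E v e f) {i : S} {j : A}
    (hi : ResidualReachable E v e f i) (hij : (i, j) ∈ E) : inflow E f j = e j := by
  obtain ⟨h, hh, hin, hslack⟩ := hi
  by_contra hne
  have hlt : inflow E f j < e j := lt_of_le_of_ne (hf.1.inflow_le j) hne
  set c := min (v i - outflow E h i) (e j - inflow E f j)
  have hc : 0 < c := lt_min (by linarith) (by linarith)
  have hg := hh.add_single hij (c := c) (by linarith [hh.nonneg hij])
    (by linarith [min_le_left (v i - outflow E h i) (e j - inflow E f j)])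
    (by rw [hin]; linarith [min_le_right (v i - outflow E h i) (e j - inflow E f j)])
  have hg_in : inflow E (h + (Pi.single i (Pi.single j c) : S → A → ℝ)) =
      inflow E f + Pi.single j c := by
    rw [inflow_add, inflow_single hij, hin]
  refine (hf.2 _ hg).not_gt (objective_lt_of_inflow_lt he hg.inflow_le (fun b => ?_) ⟨j, ?_⟩)
  · rw [hg_in, Pi.add_apply, le_add_iff_nonneg_right, Pi.single_apply]
    split_ifs <;> linarith
  · simpa [hg_in] using hc

end Reachability

section Cut

variable {E : Finset (S × A)} {v : S → ℝ} {e : A → ℝ} {f : S → A → ℝ}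
  {R : Finset S} {B : Finset A}

variable (f) in
lemma sum_outflow_compl_add_sum_inflow
    (hcut : ∀ i j, (i, j) ∈ E → i ∈ R → j ∈ B) :
    ∑ i ∈ Rᶜ, outflow E f i + ∑ j ∈ B, inflow E f j =
      flowValue E f + ∑ p ∈ E.filter (fun p => p.1 ∉ R ∧ p.2 ∈ B), f p.1 p.2 := by
  rw [sum_outflow, sum_inflow, ← sum_union_inter, filter_union_right, ← filter_and]
  simp only [mem_compl]
  rw [filter_true_of_mem fun p hp => ?_]
  · rfl
  · by_cases h : p.1 ∈ R
    · exact Or.inr (hcut p.1 p.2 hp h)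
    · exact Or.inl h

lemma isMaxFlow_of_cut (hf : Feasible E v e f)
    (hcut : ∀ i j, (i, j) ∈ E → i ∈ R → j ∈ B) (hout : ∀ i ∉ R, outflow E f i = v i)
    (hin : ∀ j ∈ B, inflow E f j = e j)
    (hzero : ∀ i j, (i, j) ∈ E → i ∉ R → j ∈ B → f i j = 0) : IsMaxFlow E v e f := by
  refine ⟨hf, fun g hg => ?_⟩
  have hg_cross : 0 ≤ ∑ p ∈ E.filter (fun p => p.1 ∉ R ∧ p.2 ∈ B), g p.1 p.2 :=
    sum_nonneg fun p hp => hg.nonneg (mem_filter.1 hp).1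
  have hf_cross : ∑ p ∈ E.filter (fun p => p.1 ∉ R ∧ p.2 ∈ B), f p.1 p.2 = 0 :=
    sum_eq_zero fun p hp => hzero p.1 p.2 (mem_filter.1 hp).1 (mem_filter.1 hp).2.1
      (mem_filter.1 hp).2.2
  have hR : ∑ i ∈ Rᶜ, outflow E g i ≤ ∑ i ∈ Rᶜ, outflow E f i :=
    sum_le_sum fun i hi => (hg.outflow_le i).trans_eq (hout i (mem_compl.1 hi)).symm
  have hB : ∑ j ∈ B, inflow E g j ≤ ∑ j ∈ B, inflow E f j :=
    sum_le_sum fun j hj => (hg.inflow_le j).trans_eq (hin j hj).symm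
  linarith [sum_outflow_compl_add_sum_inflow g hcut, sum_outflow_compl_add_sum_inflow f hcut]

end Cut

theorem mwsr_isMaxFlow_general (E : Finset (S × A)) (v : S → ℝ) (e : A → ℝ)
    (he : ∀ j, 0 < e j)
    (f : S → A → ℝ) (hf : MWSR E v e f) :
    IsMaxFlow E v e f := by
  set R := univ.filter (ResidualReachable E v e f)
  set B := univ.filter (fun j => ∃ i ∈ R, (i, j) ∈ E)
  have hR : ∀ i, i ∈ R ↔ ResidualReachable E v e f i := by simp [R]
  have hB : ∀ j, j ∈ B ↔ ∃ i ∈ R, (i, j) ∈ E := by simp [B]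
  refine isMaxFlow_of_cut hf.1 (fun i j hij hi => (hB j).2 ⟨i, hi, hij⟩) (fun i hi => ?_)
    (fun j hj => ?_) (fun i j hij hi hj => ?_)
  · by_contra hne
    exact hi ((hR i).2 (residualReachable_of_outflow_lt hf.1
      (lt_of_le_of_ne (hf.1.outflow_le i) hne)))
  · obtain ⟨i, hi, hij⟩ := (hB j).1 hj
    exact ((hR i).1 hi).inflow_eq he hf hij
  · obtain ⟨i₀, hi₀, hi₀j⟩ := (hB j).1 hj
    by_contra hne
    exact hi ((hR i).2 (((hR i₀).1 hi₀).of_edge hf.1 hi₀j hij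
      (lt_of_le_of_ne (hf.1.nonneg hij) (Ne.symm hne))))

/-- Every MWSR flow is a maximum flow. -/
theorem mwsr_isMaxFlow (E : Finset (S × A)) (v : S → ℝ) (e : A → ℝ)
    (hv : ∀ i, 0 ≤ v i) (he : ∀ j, 0 < e j)
    (f : S → A → ℝ) (hf : MWSR E v e f) :
    IsMaxFlow E v e f :=
  mwsr_isMaxFlow_general E v e he f hf
end

section
/- Any two MWSR flows are equivalent: if f and g are feasible flows each minimizing ∑_{j∈A} e_j (r_j)² among all feasible flows, then r_j^f = r_j^g for every account j ∈ A. -/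
/-!
The feasible flows form a convex set on which every risk ratio is an affine function of the
flow, while the objective is a positively weighted sum of squares of the risk ratios. If two
minimizers had different risk ratios at some account, strict convexity of `x ↦ x ^ 2` would
make their midpoint a feasible flow with strictly smaller objective.
-/

open Finset
open scoped Classical

variable {S A : Type*} [Fintype S] [Fintype A]

theorem convex_setOf_feasible (E : Finset (S × A)) (v : S → ℝ) (e : A → ℝ) :
    Convex ℝ {f | Feasible E v e f} := by
  rintro f ⟨f_nonneg, f_off, f_out, f_in⟩ g ⟨g_nonneg, g_off, g_out, g_in⟩ a b ha hb hab
  change Feasible E v e (a • f + b • g)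
  simp only [Feasible, Pi.add_apply, Pi.smul_apply, smul_eq_mul,
    sum_add_distrib, ← mul_sum]
  refine ⟨fun i j hij => ?_, fun i j hij => ?_, fun i => ?_, fun j => ?_⟩
  · have := f_nonneg i j hij
    have := g_nonneg i j hij
    positivity
  · simp [f_off i j hij, g_off i j hij]
  · calc a * _ + b * _ ≤ a * v i + b * v i := by gcongr <;> [exact f_out i; exact g_out i]
      _ = v i := by rw [← add_mul, hab, one_mul]
  · calc a * _ + b * _ ≤ a * e j + b * e j := by gcongr <;> [exact f_in j; exact g_in j]
      _ = e j := by rw [← add_mul, hab, one_mul]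

theorem riskRatio_add_smul {S A : Type*} [Fintype S] (E : Finset (S × A)) (e : A → ℝ)
    (f g : S → A → ℝ) {a b : ℝ} (hab : a + b = 1) (j : A) :
    riskRatio E e (a • f + b • g) j = a * riskRatio E e f j + b * riskRatio E e g j := by
  simp only [riskRatio, Pi.add_apply, Pi.smul_apply, smul_eq_mul, sum_add_distrib, ← mul_sum]
  rw [mul_div_assoc', mul_div_assoc', ← add_div]
  congr 1
  linear_combination (e j) * hab.symm

theorem objective_add_smul_lt (E : Finset (S × A)) (e : A → ℝ) (he : ∀ j, 0 < e j)
    {f g : S → A → ℝ} (hfg : ∃ j, riskRatio E e f j ≠ riskRatio E e g j)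
    {a b : ℝ} (ha : 0 < a) (hb : 0 < b) (hab : a + b = 1) :
    objective E e (a • f + b • g) < a * objective E e f + b * objective E e g := by
  have sq_convex := (even_two.strictConvexOn_pow two_ne_zero : StrictConvexOn ℝ Set.univ _)
  simp only [objective, mul_sum, ← sum_add_distrib, riskRatio_add_smul E e f g hab]
  obtain ⟨j₀, hj₀⟩ := hfg
  refine sum_lt_sum (fun j _ => ?_) ⟨j₀, mem_univ _, ?_⟩
  · have := mul_le_mul_of_nonneg_left (sq_convex.convexOn.2 (Set.mem_univ (riskRatio E e f j))
      (Set.mem_univ (riskRatio E e g j)) ha.le hb.le hab) (he j).le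
    simp only [smul_eq_mul] at this
    linarith
  · have := mul_lt_mul_of_pos_left (sq_convex.2 (Set.mem_univ (riskRatio E e f j₀))
      (Set.mem_univ (riskRatio E e g j₀)) hj₀ ha hb hab) (he j₀)
    simp only [smul_eq_mul] at this
    linarith

theorem mwsr_equivalent_general (E : Finset (S × A)) (v : S → ℝ) (e : A → ℝ)
    (he : ∀ j, 0 < e j)
    (f g : S → A → ℝ) (hf : MWSR E v e f) (hg : MWSR E v e g) :
    ∀ j : A, riskRatio E e f j = riskRatio E e g j := by
  by_contra! hfg
  have hmid_feasible : Feasible E v e ((1 / 2 : ℝ) • f + (1 / 2 : ℝ) • g) :=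
    convex_setOf_feasible E v e hf.1 hg.1 (by norm_num) (by norm_num) (by norm_num)
  have hmid_lt := objective_add_smul_lt E e he hfg (a := 1 / 2) (b := 1 / 2)
    (by norm_num) (by norm_num) (by norm_num)
  have hfg_eq : objective E e f = objective E e g := le_antisymm (hf.2 g hg.1) (hg.2 f hf.1)
  have := hf.2 _ hmid_feasible
  linarith

/-- Any two MWSR flows are equivalent. -/
theorem mwsr_equivalent (E : Finset (S × A)) (v : S → ℝ) (e : A → ℝ)
    (hv : ∀ i, 0 ≤ v i) (he : ∀ j, 0 < e j)
    (f g : S → A → ℝ) (hf : MWSR E v e f) (hg : MWSR E v e g) :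
    ∀ j : A, riskRatio E e f j = riskRatio E e g j :=
  mwsr_equivalent_general E v e he f g hf hg
end

section
/- Let f be a ratio-balanced maximum flow, assume A is nonempty, let R = max_{j∈A} r_j^f and assume R > 0. Let A' = {j ∈ A : r_j^f = R} and S' = {i ∈ S : f_{ij} > 0 for some j ∈ A'}. Then securities in S' send flow only to A': for every i ∈ S' and every edge (i,j) ∈ E with j ∉ A', f_{ij} = 0. -/
open Finset
open scoped Classical

variable {S A : Type*} [Fintype S] [Fintype A]

/-! Applying the ratio constraint in both directions shows that all accounts receiving positive
flow from one security have the same risk ratio. A security of `S'` feeds an account of ratio `R`,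
so every account it feeds has ratio `R`. -/

namespace Feasible

variable {E : Finset (S × A)} {v : S → ℝ} {e : A → ℝ} {f : S → A → ℝ} {i : S} {j : A}

theorem mem_of_ne_zero (hf : Feasible E v e f) (h : f i j ≠ 0) : (i, j) ∈ E := by
  by_contra hE
  exact h (hf.2.1 i j hE)

theorem mem_of_pos (hf : Feasible E v e f) (h : 0 < f i j) : (i, j) ∈ E :=
  hf.mem_of_ne_zero h.ne'

theorem pos_of_ne_zero (hf : Feasible E v e f) (h : f i j ≠ 0) : 0 < f i j :=
  (hf.1 i j (hf.mem_of_ne_zero h)).lt_of_ne' h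

end Feasible

namespace RatioBalanced

variable {E : Finset (S × A)} {v : S → ℝ} {e : A → ℝ} {f : S → A → ℝ}

theorem feasible (hf : RatioBalanced E v e f) : Feasible E v e f :=
  hf.1.1

theorem riskRatio_eq_of_pos (hf : RatioBalanced E v e f) {i : S} {j l : A}
    (hj : 0 < f i j) (hl : 0 < f i l) : riskRatio E e f j = riskRatio E e f l := by
  have hij := hf.feasible.mem_of_pos hj
  have hil := hf.feasible.mem_of_pos hl
  exact le_antisymm (hf.2 i l j hil hl hij) (hf.2 i j l hij hj hil)

end RatioBalanced

theorem Sprime_flow_only_into_Aprime_general (E : Finset (S × A)) (v : S → ℝ) (e : A → ℝ)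
    (f : S → A → ℝ) (hf : RatioBalanced E v e f)
    (R : ℝ) :
    ∀ i : S, (∃ j' : A, riskRatio E e f j' = R ∧ 0 < f i j') →
      ∀ j : A, (i, j) ∈ E → riskRatio E e f j ≠ R → f i j = 0 := by
  rintro i ⟨j', hj'R, hj'pos⟩ j _ hjR
  by_contra hne
  exact hjR (hj'R ▸ hf.riskRatio_eq_of_pos (hf.feasible.pos_of_ne_zero hne) hj'pos)

/-- securities of `S'` (those sending positive flow to a
least-secured account) send flow only into `A'` (the least-secured accounts). -/
theorem Sprime_flow_only_into_Aprime [Nonempty A] (E : Finset (S × A)) (v : S → ℝ) (e : A → ℝ)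
    (hv : ∀ i, 0 ≤ v i) (he : ∀ j, 0 < e j)
    (f : S → A → ℝ) (hf : RatioBalanced E v e f)
    (R : ℝ) (hRdef : R = Finset.univ.sup' Finset.univ_nonempty (riskRatio E e f))
    (hRpos : 0 < R) :
    ∀ i : S, (∃ j' : A, riskRatio E e f j' = R ∧ 0 < f i j') →
      ∀ j : A, (i, j) ∈ E → riskRatio E e f j ≠ R → f i j = 0 :=
  Sprime_flow_only_into_Aprime_general E v e f hf R
end

section
/- Suppose the values and exposures are integers: v_i ∈ ℕ for all i ∈ S, e_j ∈ ℕ with e_j ≥ 1 for all j ∈ A, all bounded by M ∈ ℕ; let n = |S| + |A|. If f is a ratio-balanced maximum flow, then for every account j ∈ A the risk ratio r_j^f is a rational number expressible as p/q with natural numbers p, q satisfying p ≤ n·M and 1 ≤ q ≤ n·M. -/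
open Finset
open scoped Classical

variable {S A : Type*} [Fintype S] [Fintype A]

/-!
Fix an account `j` with risk ratio `r > 0` and let `C` be the accounts of ratio exactly `r`,
`D` the securities sending flow into `C`. By the ratio constraint a security of `D` sends flow
only into `C`, and by maximality it is saturated, since every account of `C` has slack
`r * e > 0` and could otherwise be augmented. Counting the flow into `C` in two ways gives
`(1 - r) * ∑_C e = ∑_D v`, so `r = (∑_C e - ∑_D v) / ∑_C e`, a fraction with integer
denominator at most `|A| * M`.
-/

theorem sum_sum_eq_sum_filter_sum_of_closed {M : Type*} [AddCommMonoid M] {f : S → A → M}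
    {C : Finset A} (hC : ∀ i l l', l ∈ C → f i l ≠ 0 → f i l' ≠ 0 → l' ∈ C) :
    ∑ l ∈ C, ∑ i, f i l = ∑ i ∈ univ.filter (fun i => ∃ l ∈ C, f i l ≠ 0), ∑ l, f i l := by
  rw [sum_comm, ← sum_filter_of_ne fun i _ h => exists_ne_zero_of_sum_ne_zero h]
  refine sum_congr rfl fun i hi => sum_subset (subset_univ C) fun l' _ hl' => ?_
  obtain ⟨l, hlC, hil⟩ := (mem_filter.1 hi).2
  exact by_contra fun h => hl' (hC i l l' hlC hil h)

section Flow

variable {E : Finset (S × A)} {v : S → ℝ} {e : A → ℝ} {f : S → A → ℝ}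

omit [Fintype S] in
theorem sum_filter_mem_eq_sum_left (hzero : ∀ i j, (i, j) ∉ E → f i j = 0) (i : S) :
    ∑ j ∈ univ.filter (fun j => (i, j) ∈ E), f i j = ∑ j, f i j :=
  sum_filter_of_ne fun j _ h => by_contra fun hE => h (hzero i j hE)

omit [Fintype A] in
theorem sum_filter_mem_eq_sum_right (hzero : ∀ i j, (i, j) ∉ E → f i j = 0) (j : A) :
    ∑ i ∈ univ.filter (fun i => (i, j) ∈ E), f i j = ∑ i, f i j :=
  sum_filter_of_ne fun i _ h => by_contra fun hE => h (hzero i j hE)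

theorem feasible_iff :
    Feasible E v e f ↔ (∀ i j, (i, j) ∈ E → 0 ≤ f i j) ∧ (∀ i j, (i, j) ∉ E → f i j = 0) ∧
      (∀ i, ∑ j, f i j ≤ v i) ∧ (∀ j, ∑ i, f i j ≤ e j) := by
  refine and_congr_right fun _ => and_congr_right fun hzero => ?_
  simp only [sum_filter_mem_eq_sum_left hzero, sum_filter_mem_eq_sum_right hzero]

theorem Feasible.mul_riskRatio (hf : Feasible E v e f) {j : A} (hj : e j ≠ 0) :
    e j * riskRatio E e f j = e j - ∑ i, f i j := by
  rw [riskRatio, sum_filter_mem_eq_sum_right hf.2.1, mul_div_cancel₀ _ hj]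

theorem Feasible.riskRatio_nonneg (hf : Feasible E v e f) {j : A} (hj : 0 < e j) :
    0 ≤ riskRatio E e f j :=
  div_nonneg (sub_nonneg.2 (hf.2.2.2 j)) hj.le

theorem IsMaxFlow.outflow_eq_or_inflow_eq (hf : IsMaxFlow E v e f) {i : S} {l : A}
    (hil : (i, l) ∈ E) : ∑ l', f i l' = v i ∨ ∑ i', f i' l = e l := by
  obtain ⟨hfeas, hmax⟩ := hf
  obtain ⟨hnn, hzero, hout, hin⟩ := feasible_iff.1 hfeas
  by_contra! hslack
  set ε := min (v i - ∑ l', f i l') (e l - ∑ i', f i' l)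
  have hε : 0 < ε :=
    lt_min (sub_pos.2 ((hout i).lt_of_ne hslack.1)) (sub_pos.2 ((hin l).lt_of_ne hslack.2))
  let g : S → A → ℝ := fun a b => f a b + if (a, b) = (i, l) then ε else 0
  have hrow : ∀ a, ∑ b, g a b = ∑ b, f a b + if a = i then ε else 0 := fun a => by
    simp [g, sum_add_distrib, ite_and]
  have hcol : ∀ b, ∑ a, g a b = ∑ a, f a b + if b = l then ε else 0 := fun b => by
    simp [g, sum_add_distrib, ite_and]
  have hg : Feasible E v e g := by
    refine feasible_iff.2 ⟨fun a b hab => ?_, fun a b hab => ?_, fun a => ?_, fun b => ?_⟩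
    · have := hnn a b hab
      simp only [g]
      split_ifs <;> linarith
    · have hne : (a, b) ≠ (i, l) := fun h => hab (h ▸ hil)
      simp only [g, hzero a b hab, if_neg hne, add_zero]
    · have : ε ≤ v i - ∑ l', f i l' := min_le_left _ _
      rw [hrow]
      split_ifs with ha
      · subst ha; linarith
      · linarith [hout a]
    · have : ε ≤ e l - ∑ i', f i' l := min_le_right _ _
      rw [hcol]
      split_ifs with hb
      · subst hb; linarith
      · linarith [hin b]
  have hval : flowValue E g = flowValue E f + ε := by
    simp only [flowValue, g, Prod.mk.eta, sum_add_distrib, sum_ite_eq', if_pos hil]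
  linarith [hmax g hg]

theorem IsMaxFlow.outflow_eq_of_riskRatio_pos (hf : IsMaxFlow E v e f) {i : S} {l : A}
    (hil : (i, l) ∈ E) (hl : 0 < e l) (hr : 0 < riskRatio E e f l) : ∑ l', f i l' = v i := by
  refine (hf.outflow_eq_or_inflow_eq hil).resolve_right fun hsat => hr.ne' ?_
  simpa [hsat, hl.ne'] using hf.1.mul_riskRatio hl.ne'

omit [Fintype A] in
theorem RatioConstraint.riskRatio_eq (h : RatioConstraint E e f) {i : S} {j l : A}
    (hij : (i, j) ∈ E) (hil : (i, l) ∈ E) (hfij : 0 < f i j) (hfil : 0 < f i l) :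
    riskRatio E e f j = riskRatio E e f l :=
  le_antisymm (h i l j hil hfil hij) (h i j l hij hfij hil)

theorem RatioBalanced.exists_riskRatio_mul_sum_eq (hf : RatioBalanced E v e f)
    (he : ∀ l, 0 < e l) {j : A} (hr : 0 < riskRatio E e f j) :
    ∃ (C : Finset A) (D : Finset S), j ∈ C ∧
      riskRatio E e f j * ∑ l ∈ C, e l = ∑ l ∈ C, e l - ∑ i ∈ D, v i := by
  obtain ⟨hmax, hratio⟩ := hf
  obtain ⟨hnn, hzero, -, -⟩ := feasible_iff.1 hmax.1
  have hsupp : ∀ {i l}, f i l ≠ 0 → (i, l) ∈ E ∧ 0 < f i l := fun {i l} h =>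
    have hil : (i, l) ∈ E := by_contra fun hE => h (hzero i l hE)
    ⟨hil, (hnn i l hil).lt_of_ne' h⟩
  set r := riskRatio E e f j
  set C := univ.filter (fun l => riskRatio E e f l = r)
  set D := univ.filter (fun i => ∃ l ∈ C, f i l ≠ 0)
  have hclosed : ∀ i l l', l ∈ C → f i l ≠ 0 → f i l' ≠ 0 → l' ∈ C := by
    intro i l l' hl hil hil'
    obtain ⟨hE, hpos⟩ := hsupp hil
    obtain ⟨hE', hpos'⟩ := hsupp hil'
    simpa [C, ← hratio.riskRatio_eq hE hE' hpos hpos'] using hl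
  have hsat : ∀ i ∈ D, ∑ l, f i l = v i := by
    intro i hi
    obtain ⟨l, hlC, hil⟩ := (mem_filter.1 hi).2
    exact hmax.outflow_eq_of_riskRatio_pos (hsupp hil).1 (he l) ((mem_filter.1 hlC).2 ▸ hr)
  refine ⟨C, D, by simp [C, r], ?_⟩
  calc r * ∑ l ∈ C, e l = ∑ l ∈ C, (e l - ∑ i, f i l) := by
        rw [mul_sum]
        refine sum_congr rfl fun l hl => ?_
        rw [← hmax.1.mul_riskRatio (he l).ne', (mem_filter.1 hl).2, mul_comm]
    _ = ∑ l ∈ C, e l - ∑ l ∈ C, ∑ i, f i l := sum_sub_distrib _ _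
    _ = ∑ l ∈ C, e l - ∑ i ∈ D, v i := by
        rw [sum_sum_eq_sum_filter_sum_of_closed hclosed, sum_congr rfl hsat]

end Flow

/-- with integral values and exposures bounded by `M`, every risk
ratio of a ratio-balanced flow is a fraction `p / q` with `p ≤ n·M` and
`1 ≤ q ≤ n·M`, where `n = |S| + |A|`. -/
theorem riskRatio_rational (E : Finset (S × A)) (v : S → ℝ) (e : A → ℝ) (M : ℕ)
    (hv : ∀ i, ∃ k : ℕ, v i = (k : ℝ) ∧ k ≤ M)
    (he : ∀ j, ∃ k : ℕ, e j = (k : ℝ) ∧ 1 ≤ k ∧ k ≤ M)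
    (f : S → A → ℝ) (hf : RatioBalanced E v e f) :
    ∀ j : A, ∃ p q : ℕ,
      p ≤ (Fintype.card S + Fintype.card A) * M ∧
      1 ≤ q ∧ q ≤ (Fintype.card S + Fintype.card A) * M ∧
      riskRatio E e f j = (p : ℝ) / (q : ℝ) := by
  intro j
  choose ke hke hke1 hkeM using he
  choose kv hkv _ using hv
  have he_pos : ∀ l, 0 < e l := fun l => by rw [hke l]; exact_mod_cast hke1 l
  have hA : ∀ C : Finset A, ∑ l ∈ C, ke l ≤ (Fintype.card S + Fintype.card A) * M :=
    fun C => calc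
      ∑ l ∈ C, ke l ≤ #C * M := by simpa using sum_le_card_nsmul C ke M fun l _ => hkeM l
      _ ≤ (Fintype.card S + Fintype.card A) * M := by
        gcongr
        exact (card_le_univ C).trans le_add_self
  obtain hr | hr := (hf.1.1.riskRatio_nonneg (he_pos j)).eq_or_lt
  · exact ⟨0, 1, Nat.zero_le _, le_rfl, (hke1 j).trans (by simpa using hA {j}),
      by simp [← hr]⟩
  obtain ⟨C, D, hjC, hCD⟩ := hf.exists_riskRatio_mul_sum_eq he_pos hr
  set q := ∑ l ∈ C, ke l
  set w := ∑ i ∈ D, kv i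
  have hq : 1 ≤ q := (hke1 j).trans (single_le_sum (fun l _ => Nat.zero_le _) hjC)
  have hCD' : riskRatio E e f j * q = q - w := by simpa [q, w, hke, hkv] using hCD
  have hwq : w ≤ q := by exact_mod_cast sub_nonneg.1 (hCD' ▸ mul_nonneg hr.le q.cast_nonneg)
  refine ⟨q - w, q, (q.sub_le w).trans (hA C), hq, hA C, ?_⟩
  rw [Nat.cast_sub hwq, ← hCD', mul_div_cancel_right₀ _ (by positivity)]
end
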